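/- arXiv:2603.14428 — 2 statements merged into one kernel-verified Lean document; each statement's English description precedes it below -/
import Mathlib

section
/- Let P = P(M,F) be a reduced poset with M finite, and let D be a reduced poset with base N in which every element is either N itself or a singleton (i.e., D = P(N,∅)). Suppose f : P → D is a surjective pp-morphism and π : M → N is a surjection such that π(a) = π(b) implies f({a}) = f({b}) for all a, b ∈ M. Then for all X, Y ∈ P, π[Y] ⊆ π[X] implies f(X) ≤ f(Y). -/
open Set Function

variable {α β γ : Type*}

/-- `Mset x` is the set of maximal elements (of the ambient poset) lying above `x`. -/
def Mset [PartialOrder α] (x : α) : Set α := {y | IsMax y ∧ x ≤ y}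

/-- A pp-morphism: an order-preserving map `h` with `M(h x) = h[M x]` for all `x`. -/
def IsPP [PartialOrder α] [PartialOrder β] (h : α → β) : Prop :=
  Monotone h ∧ ∀ x, Mset (h x) = h '' Mset x

/-- The reverse-inclusion partial order on a family of subsets. -/
def revPO (p : Set α → Prop) : PartialOrder {S : Set α // p S} :=
  PartialOrder.lift (fun A => OrderDual.toDual (A : Set α))
    (fun A B h => Subtype.ext (by simpa using h))

/-- Membership in the reduced poset `P(M, F)`: the base `M`, the singletons of elements
of `M`, and the members of `F`. -/
def RMem (M : Set α) (F : Set (Set α)) (S : Set α) : Prop :=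
  S = M ∨ (∃ m ∈ M, S = {m}) ∨ S ∈ F

/-- The reduced poset `P(M, F)`, ordered by reverse inclusion. -/
def Red (M : Set α) (F : Set (Set α)) := {S : Set α // RMem M F S}

instance (M : Set α) (F : Set (Set α)) : PartialOrder (Red M F) := revPO _

/-- The bottom element `M` of the reduced poset `P(M, F)`. -/
def botElem (M : Set α) (F : Set (Set α)) : Red M F := ⟨M, Or.inl rfl⟩

/-- The singleton element `{x}` (for `x ∈ M`) of the reduced poset `P(M, F)`. -/
def singElem (M : Set α) (F : Set (Set α)) {x : α} (hx : x ∈ M) : Red M F :=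
  ⟨{x}, Or.inr (Or.inl ⟨x, hx, rfl⟩)⟩


theorem red_le_iff {M : Set α} {F : Set (Set α)} {X Y : Red M F} :
    X ≤ Y ↔ Y.1 ⊆ X.1 := Iff.rfl

theorem red_nonempty {M : Set α} {F : Set (Set α)} (hMne : M.Nonempty)
    (hF : ∀ S ∈ F, S.Nonempty ∧ S ⊆ M) (X : Red M F) : X.1.Nonempty := by
  rcases X.2 with h | ⟨m, _, h⟩ | h
  · rw [h]; exact hMne
  · rw [h]; exact ⟨m, rfl⟩
  · exact (hF _ h).1

theorem red_sub {M : Set α} {F : Set (Set α)}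
    (hF : ∀ S ∈ F, S.Nonempty ∧ S ⊆ M) (X : Red M F) : X.1 ⊆ M := by
  rcases X.2 with h | ⟨m, hm, h⟩ | h
  · rw [h]
  · rw [h]; simpa
  · exact (hF _ h).2

theorem sing_isMax {M : Set α} {F : Set (Set α)} (hMne : M.Nonempty)
    (hF : ∀ S ∈ F, S.Nonempty ∧ S ⊆ M) {x : α} (hx : x ∈ M) :
    IsMax (singElem M F hx) := by
  intro w hw
  rw [red_le_iff] at hw ⊢
  obtain ⟨z, hz⟩ := red_nonempty hMne hF w
  have hzx : z = x := hw hz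
  intro y hy
  simp only [singElem, Set.mem_singleton_iff] at hy
  rw [hy, ← hzx]; exact hz

/-- Key monotonicity: if `π` refines the fibers of `f` on singletons, then
`π[Y] ⊆ π[X]` implies `f X ≤ f Y`. -/
theorem stmt10 {β : Type*} (M : Set α) (F : Set (Set α)) (hM : M.Finite) (hMne : M.Nonempty)
    (hF : ∀ S ∈ F, S.Nonempty ∧ S ⊆ M)
    (N : Set β) (hN : N.Finite) (hNne : N.Nonempty)
    (f : Red M F → Red N (∅ : Set (Set β)))
    (hf : Function.Surjective f) (hpp : IsPP f)
    (π : α → β) (hmap : Set.MapsTo π M N) (hsurj : Set.SurjOn π M N)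
    (hcomp : ∀ a (ha : a ∈ M), ∀ b (hb : b ∈ M), π a = π b →
      f (singElem M F ha) = f (singElem M F hb)) :
    ∀ X Y : Red M F, π '' Y.1 ⊆ π '' X.1 → f X ≤ f Y := by
  intro X Y hXY
  have hFD : ∀ S ∈ (∅ : Set (Set β)), S.Nonempty ∧ S ⊆ N := by simp
  have key : Mset (f Y) ⊆ Mset (f X) → f X ≤ f Y := by
    intro h
    rw [red_le_iff]
    intro n hn
    have hnN : n ∈ N := red_sub hFD (f Y) hn
    have hmem : singElem N ∅ hnN ∈ Mset (f Y) :=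
      ⟨sing_isMax hNne hFD hnN, red_le_iff.mpr (Set.singleton_subset_iff.mpr hn)⟩
    exact red_le_iff.mp (h hmem).2 rfl
  apply key
  rw [hpp.2 X, hpp.2 Y]
  rintro w ⟨s, ⟨hsmax, hYs⟩, rfl⟩
  have hsY : s.1 ⊆ Y.1 := red_le_iff.mp hYs
  obtain ⟨m, hm⟩ := red_nonempty hMne hF s
  have hmY : m ∈ Y.1 := hsY hm
  have hmM : m ∈ M := red_sub hF Y hmY
  have hseq : s = singElem M F hmM := by
    have h1 : s ≤ singElem M F hmM :=
      red_le_iff.mpr (Set.singleton_subset_iff.mpr hm)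
    exact le_antisymm h1 (hsmax h1)
  obtain ⟨m', hm'X, hπ⟩ := hXY ⟨m, hmY, rfl⟩
  have hm'M : m' ∈ M := red_sub hF X hm'X
  refine ⟨singElem M F hm'M,
    ⟨sing_isMax hMne hF hm'M, red_le_iff.mpr (Set.singleton_subset_iff.mpr hm'X)⟩, ?_⟩
  rw [hseq]
  exact hcomp m' hm'M m hmM hπ
end

section
/- Let P = P(M,F) be a reduced poset with M finite, D = P(N,∅) a reduced poset with |N| = m maximal elements, f : P → D a surjective pp-morphism, and π : M → K a surjection onto a finite set K such that π(a) = π(b) implies f({a}) = f({b}). Then there is a well-defined surjective pp-morphism f̄ : P^π → D given by f̄(π[X]) = f(X), where P^π = {π[X] : X ∈ P} is ordered by reverse inclusion. -/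
open Set Function

variable {α β γ : Type*}

/-- The poset `P^π = { π[X] : X ∈ P(M,F) }`, ordered by reverse inclusion. -/
def Ppi (M : Set α) (F : Set (Set α)) (π : α → β) :=
  {T : Set β // ∃ X : Red M F, T = π '' X.1}

instance (M : Set α) (F : Set (Set α)) (π : α → β) : PartialOrder (Ppi M F π) := revPO _

/-! In `P`, `P^π` and `D` the maximal elements above `x` are exactly the singletons contained
in `x` (in `D` this needs `N ≠ ∅`; otherwise `D` is a point), so an element of `D` is determined
by the maximal elements above it. Hence `f X` is determined by the set of values
`f {a}` for `a ∈ X`, which by the compatibility of `f` with `π` depends only on `π[X]`; this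
makes `f` factor through the projection `X ↦ π[X]`. That projection is itself surjective and
preserves maximal elements, so the factor inherits the pp-property from `f`. -/

section SetPoset

variable {T : Type*} [PartialOrder T] {s : T → Set α} (hs : ∀ x y : T, x ≤ y ↔ s y ⊆ s x)
  (hne : ∀ x, (s x).Nonempty) (hsing : ∀ x, ∀ a ∈ s x, ∃ y, s y = {a})
include hs hne

theorem isMax_of_eq_singleton {x : T} {a : α} (hx : s x = {a}) : IsMax x := by
  intro z hz
  have hza : s z = {a} :=
    (subset_singleton_iff_eq.1 (hx ▸ (hs x z).1 hz)).resolve_left (hne z).ne_empty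
  exact (hs z x).2 (hx.trans hza.symm).subset

include hsing

theorem mem_Mset_iff {x y : T} : y ∈ Mset x ↔ ∃ a ∈ s x, s y = {a} := by
  constructor
  · rintro ⟨hmax, hxy⟩
    obtain ⟨a, hay⟩ := hne y
    obtain ⟨z, hz⟩ := hsing y a hay
    have hyz : s y ⊆ {a} :=
      hz ▸ (hs z y).1 (hmax ((hs y z).2 (hz ▸ singleton_subset_iff.2 hay)))
    exact ⟨a, (hs x y).1 hxy hay, subset_antisymm hyz (singleton_subset_iff.2 hay)⟩
  · rintro ⟨a, hax, hya⟩
    exact ⟨isMax_of_eq_singleton hs hne hya, (hs x y).2 (hya ▸ singleton_subset_iff.2 hax)⟩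

theorem le_of_Mset_subset {x y : T} (h : Mset y ⊆ Mset x) : x ≤ y := by
  refine (hs x y).2 fun a hay => ?_
  obtain ⟨z, hz⟩ := hsing y a hay
  have hzy : z ∈ Mset y := (mem_Mset_iff hs hne hsing).2 ⟨a, hay, hz⟩
  obtain ⟨b, hbx, hzb⟩ := (mem_Mset_iff hs hne hsing).1 (h hzy)
  exact (singleton_injective (hz.symm.trans hzb)).symm ▸ hbx

end SetPoset

theorem IsPP.of_comp [PartialOrder α] [PartialOrder β] [PartialOrder γ]
    {q : α → β} {g : β → γ} (hq : Surjective q) (hqM : ∀ x, Mset (q x) = q '' Mset x)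
    (hgq : IsPP (g ∘ q))
    (hle : ∀ x y, q x ≤ q y → g (q x) ≤ g (q y)) : IsPP g := by
  refine ⟨hq.forall₂.2 hle, hq.forall.2 fun x => ?_⟩
  rw [hqM, image_image]
  exact hgq.2 x

namespace Red

variable {M : Set α} {F : Set (Set α)}

theorem le_iff {x y : Red M F} : x ≤ y ↔ y.1 ⊆ x.1 := Iff.rfl

variable (hF : ∀ S ∈ F, S.Nonempty ∧ S ⊆ M)
include hF

theorem subset_base (x : Red M F) : x.1 ⊆ M := by
  rcases x.2 with h | ⟨a, ha, h⟩ | h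
  · exact h.subset
  · exact h ▸ singleton_subset_iff.2 ha
  · exact (hF _ h).2

theorem nonempty (hMne : M.Nonempty) (x : Red M F) : x.1.Nonempty := by
  rcases x.2 with h | ⟨a, -, h⟩ | h
  · rw [h]; exact hMne
  · rw [h]; exact singleton_nonempty a
  · exact (hF _ h).1

theorem exists_eq_singleton (x : Red M F) (a : α) (ha : a ∈ x.1) : ∃ y : Red M F, y.1 = {a} :=
  ⟨singElem M F (subset_base hF x ha), rfl⟩

theorem mem_Mset_iff (hMne : M.Nonempty) {x y : Red M F} :
    y ∈ Mset x ↔ ∃ a ∈ x.1, y.1 = {a} :=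
  _root_.mem_Mset_iff (fun _ _ => le_iff) (nonempty hF hMne) (exists_eq_singleton hF)

theorem le_of_Mset_subset {x y : Red M F} (h : Mset y ⊆ Mset x) : x ≤ y := fun a hay =>
  _root_.le_of_Mset_subset (fun _ _ => le_iff) (nonempty hF ⟨a, subset_base hF y hay⟩)
    (exists_eq_singleton hF) h hay

end Red

namespace Ppi

variable {M : Set α} {F : Set (Set α)} {π : α → β}

theorem le_iff {T T' : Ppi M F π} : T ≤ T' ↔ T'.1 ⊆ T.1 := Iff.rfl

variable (π) in
def proj (X : Red M F) : Ppi M F π := ⟨π '' X.1, X, rfl⟩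

theorem proj_surjective : Surjective (proj (M := M) (F := F) π) := fun T =>
  let ⟨X, hX⟩ := T.2
  ⟨X, Subtype.ext hX.symm⟩

variable (hF : ∀ S ∈ F, S.Nonempty ∧ S ⊆ M)
include hF

theorem nonempty (hMne : M.Nonempty) (T : Ppi M F π) : T.1.Nonempty := by
  obtain ⟨X, rfl⟩ := proj_surjective T
  exact (Red.nonempty hF hMne X).image π

theorem exists_eq_singleton (T : Ppi M F π) (c : β) (hc : c ∈ T.1) :
    ∃ T' : Ppi M F π, T'.1 = {c} := by
  obtain ⟨X, rfl⟩ := proj_surjective T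
  obtain ⟨a, haX, rfl⟩ := hc
  exact ⟨proj π (singElem M F (Red.subset_base hF X haX)), image_singleton⟩

theorem mem_Mset_iff (hMne : M.Nonempty) {T T' : Ppi M F π} :
    T' ∈ Mset T ↔ ∃ c ∈ T.1, T'.1 = {c} :=
  _root_.mem_Mset_iff (fun _ _ => le_iff) (nonempty hF hMne) (exists_eq_singleton hF)

theorem Mset_proj (hMne : M.Nonempty) (X : Red M F) : Mset (proj π X) = proj π '' Mset X := by
  ext T
  rw [mem_Mset_iff hF hMne]
  constructor
  · rintro ⟨_, ⟨a, haX, rfl⟩, hT⟩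
    refine ⟨singElem M F (Red.subset_base hF X haX),
      (Red.mem_Mset_iff hF hMne).2 ⟨a, haX, rfl⟩, ?_⟩
    exact Subtype.ext (image_singleton.trans hT.symm)
  · rintro ⟨Y, hY, rfl⟩
    obtain ⟨a, haX, hYa⟩ := (Red.mem_Mset_iff hF hMne).1 hY
    exact ⟨π a, mem_image_of_mem π haX, (congrArg (π '' ·) hYa).trans image_singleton⟩

end Ppi

section Quotient

variable {δ : Type*} {M : Set α} {F : Set (Set α)} {N : Set δ} {G : Set (Set δ)}
  (hMne : M.Nonempty) (hF : ∀ S ∈ F, S.Nonempty ∧ S ⊆ M)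
  (hG : ∀ S ∈ G, S.Nonempty ∧ S ⊆ N)
  {f : Red M F → Red N G} (hpp : IsPP f) {π : α → β}
  (hcomp : ∀ a (ha : a ∈ M), ∀ b (hb : b ∈ M), π a = π b →
    f (singElem M F ha) = f (singElem M F hb))
include hMne hF hG hpp hcomp

theorem le_of_image_subset {X Y : Red M F} (h : π '' Y.1 ⊆ π '' X.1) : f X ≤ f Y := by
  refine Red.le_of_Mset_subset hG ?_
  rw [hpp.2, hpp.2]
  rintro _ ⟨Z, hZ, rfl⟩
  obtain ⟨b, hbY, hZb⟩ := (Red.mem_Mset_iff hF hMne).1 hZ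
  obtain ⟨a, haX, hab⟩ := h (mem_image_of_mem π hbY)
  refine ⟨singElem M F (Red.subset_base hF X haX),
    (Red.mem_Mset_iff hF hMne).2 ⟨a, haX, rfl⟩, ?_⟩
  rw [show Z = singElem M F (Red.subset_base hF Y hbY) from Subtype.ext hZb]
  exact hcomp _ _ _ _ hab

theorem factorsThrough_proj : f.FactorsThrough (Ppi.proj π) := fun X Y h =>
  have h : π '' X.1 = π '' Y.1 := congrArg Subtype.val h
  le_antisymm (le_of_image_subset hMne hF hG hpp hcomp h.ge)
    (le_of_image_subset hMne hF hG hpp hcomp h.le)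

end Quotient

theorem stmt11_general {β γ : Type*} (M : Set α) (F : Set (Set α))
    (hMne : M.Nonempty)
    (hF : ∀ S ∈ F, S.Nonempty ∧ S ⊆ M)
    (N : Set β)
    (f : Red M F → Red N (∅ : Set (Set β)))
    (hf : Function.Surjective f) (hpp : IsPP f)
    (π : α → γ)
    (hcomp : ∀ a (ha : a ∈ M), ∀ b (hb : b ∈ M), π a = π b →
      f (singElem M F ha) = f (singElem M F hb)) :
    ∃ fbar : Ppi M F π → Red N (∅ : Set (Set β)),
      (∀ X : Red M F, fbar ⟨π '' X.1, X, rfl⟩ = f X) ∧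
      Function.Surjective fbar ∧ IsPP fbar := by
  have hD : ∀ S ∈ (∅ : Set (Set β)), S.Nonempty ∧ S ⊆ N := fun _ h => h.elim
  have : Nonempty (Red N (∅ : Set (Set β))) := ⟨f (botElem M F)⟩
  obtain ⟨fbar, rfl⟩ :=
    (factorsThrough_iff f).1 (factorsThrough_proj hMne hF hD hpp hcomp)
  exact ⟨fbar, fun _ => rfl, hf.of_comp,
    hpp.of_comp Ppi.proj_surjective (Ppi.Mset_proj hF hMne)
      fun _ _ h => le_of_image_subset hMne hF hD hpp hcomp h⟩

/-- The induced map `f̄(π[X]) = f X` is a well-defined surjective pp-morphism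
`P^π → D`. -/
theorem stmt11 {β γ : Type*} (m : ℕ) (M : Set α) (F : Set (Set α))
    (hM : M.Finite) (hMne : M.Nonempty)
    (hF : ∀ S ∈ F, S.Nonempty ∧ S ⊆ M)
    (N : Set β) (hN : N.Finite) (hNcard : N.ncard = m)
    (f : Red M F → Red N (∅ : Set (Set β)))
    (hf : Function.Surjective f) (hpp : IsPP f)
    [Finite γ] (π : α → γ) (hπ : Set.SurjOn π M Set.univ)
    (hcomp : ∀ a (ha : a ∈ M), ∀ b (hb : b ∈ M), π a = π b →
      f (singElem M F ha) = f (singElem M F hb)) :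
    ∃ fbar : Ppi M F π → Red N (∅ : Set (Set β)),
      (∀ X : Red M F, fbar ⟨π '' X.1, X, rfl⟩ = f X) ∧
      Function.Surjective fbar ∧ IsPP fbar :=
  stmt11_general M F hMne hF N f hf hpp π hcomp
end
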